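/- For fixed N ≥ 1 and fixed integer k with 1 ≤ k ≤ N-1, the solution t*(k,β) of (1-β)/N = ∑_{i=0}^{k} C(N,i)(1-t)^i t^{N-i} is strictly decreasing in β on (0,1), and t*(k,β) → 0 as β → 1. -/

import Mathlib

/-!
Differentiating `binCDF N k` summand by summand, the derivatives telescope to
`(k + 1) * C(N, k + 1) * (1 - t) ^ k * t ^ (N - k - 1)`, which is positive on `(0, 1)`.
So `binCDF N k` is strictly increasing on `[0, 1]` with `binCDF N k 0 = 0`. Since
`binCDF N k (t β) = (1 - β) / N` is strictly decreasing in `β` and tends to `0` as `β → 1`,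
`t` is strictly decreasing and tends to `0`.
-/

open Finset Set Filter

/-- The cumulative distribution function of a Binomial(N, 1-t) random variable at k. -/
noncomputable def binCDF (N k : ℕ) (t : ℝ) : ℝ :=
  ∑ i ∈ Finset.range (k + 1), (N.choose i : ℝ) * (1 - t) ^ i * t ^ (N - i)

open Topology

noncomputable def binCDFDerivTerm (N j : ℕ) (t : ℝ) : ℝ :=
  (j * N.choose j : ℕ) * (1 - t) ^ (j - 1) * t ^ (N - j)

lemma hasDerivAt_binomial_term {N i : ℕ} (hi : i < N) (t : ℝ) :
    HasDerivAt (fun t : ℝ => (N.choose i : ℝ) * (1 - t) ^ i * t ^ (N - i))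
      (binCDFDerivTerm N (i + 1) t - binCDFDerivTerm N i t) t := by
  have h₁ : HasDerivAt (fun s : ℝ => (1 - s) ^ i) (i * (1 - t) ^ (i - 1) * (-1)) t :=
    ((hasDerivAt_id t).const_sub 1).pow i
  have h := (h₁.const_mul (N.choose i : ℝ)).fun_mul (hasDerivAt_pow (N - i) t)
  have hc : (i + 1) * N.choose (i + 1) = N.choose i * (N - i) := by
    rw [mul_comm, Nat.choose_succ_right_eq]
  obtain ⟨m, rfl⟩ : ∃ m, N = i + 1 + m := ⟨N - (i + 1), by omega⟩
  refine h.congr_deriv ?_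
  simp only [binCDFDerivTerm, hc, Nat.add_sub_cancel, show i + 1 + m - i = m + 1 by omega,
    show i + 1 + m - (i + 1) = m by omega]
  push_cast
  ring

lemma hasDerivAt_binCDF {N k : ℕ} (hk : k < N) (t : ℝ) :
    HasDerivAt (binCDF N k) (binCDFDerivTerm N (k + 1) t) t := by
  have h := HasDerivAt.fun_sum fun i hi =>
    hasDerivAt_binomial_term ((Finset.mem_range.mp hi).trans_le hk) t
  have h₀ : binCDFDerivTerm N 0 t = 0 := by simp [binCDFDerivTerm]
  rwa [Finset.sum_range_sub (binCDFDerivTerm N · t), h₀, sub_zero] at h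

lemma strictMonoOn_binCDF {N k : ℕ} (hk : k < N) : StrictMonoOn (binCDF N k) (Icc 0 1) := by
  refine strictMonoOn_of_deriv_pos (convex_Icc 0 1) ?_ fun x hx => ?_
  · exact (continuous_finsetSum _ fun i _ => by fun_prop).continuousOn
  rw [interior_Icc] at hx
  have hx₀ : 0 < x := hx.1
  have hx₁ : 0 < 1 - x := sub_pos.2 hx.2
  have hc : 0 < (k + 1) * N.choose (k + 1) := Nat.mul_pos k.succ_pos (Nat.choose_pos hk)
  rw [(hasDerivAt_binCDF hk x).deriv, binCDFDerivTerm]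
  positivity

lemma binCDF_zero {N k : ℕ} (hk : k < N) : binCDF N k 0 = 0 :=
  Finset.sum_eq_zero fun i hi => by
    rw [zero_pow (by simp at hi; omega), mul_zero]

theorem StrictMonoOn.tendsto_of_tendsto_comp_left {α β γ : Type*} [LinearOrder α]
    [TopologicalSpace α] [OrderTopology α] [LinearOrder β] [TopologicalSpace β] [OrderTopology β]
    {f : α → β} {a b : α} (hf : StrictMonoOn f (Icc a b)) (hab : a < b) {l : Filter γ}
    {t : γ → α} (ht : ∀ᶠ x in l, t x ∈ Icc a b) (hft : Tendsto (f ∘ t) l (𝓝 (f a))) :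
    Tendsto t l (𝓝 a) := by
  refine tendsto_order.2 ⟨fun c hc => ht.mono fun x hx => hc.trans_le hx.1, fun c hc => ?_⟩
  have hd : min c b ∈ Icc a b := ⟨le_min hc.le hab.le, min_le_right c b⟩
  filter_upwards [ht, (tendsto_order.1 hft).2 _ (hf (left_mem_Icc.2 hab.le) hd (lt_min hc hab))]
    with x hx hfx
  exact ((hf.lt_iff_lt hx hd).1 hfx).trans_le (min_le_left c b)

theorem stmt_2_general (N k : ℕ) (hN : 1 ≤ N) (hk2 : k ≤ N - 1)
    (t : ℝ → ℝ)
    (ht : ∀ β ∈ Set.Ioo (0 : ℝ) 1,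
      t β ∈ Set.Ioo (0 : ℝ) 1 ∧ (1 - β) / N = binCDF N k (t β)) :
    StrictAntiOn t (Set.Ioo 0 1) ∧
    Filter.Tendsto t (nhdsWithin 1 (Set.Ioo (0 : ℝ) 1)) (nhds 0) := by
  have hkN : k < N := by omega
  have hNpos : (0 : ℝ) < N := by exact_mod_cast hN
  have hmono := strictMonoOn_binCDF hkN
  have hmem : ∀ β ∈ Ioo (0 : ℝ) 1, t β ∈ Set.Icc 0 1 :=
    fun β hβ => Ioo_subset_Icc_self (ht β hβ).1
  constructor
  · intro β₁ h₁ β₂ h₂ hβ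
    refine (hmono.lt_iff_lt (hmem β₂ h₂) (hmem β₁ h₁)).1 ?_
    rw [← (ht β₁ h₁).2, ← (ht β₂ h₂).2]
    gcongr
  · refine hmono.tendsto_of_tendsto_comp_left zero_lt_one
      (eventually_nhdsWithin_of_forall hmem) ?_
    rw [binCDF_zero hkN]
    exact ((Continuous.tendsto' (by fun_prop) 1 0 (by simp)).mono_left nhdsWithin_le_nhds).congr'
      (eventually_nhdsWithin_of_forall fun β hβ => (ht β hβ).2)

theorem stmt_2 (N k : ℕ) (hN : 1 ≤ N) (hk1 : 1 ≤ k) (hk2 : k ≤ N - 1)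
    (t : ℝ → ℝ)
    (ht : ∀ β ∈ Set.Ioo (0 : ℝ) 1,
      t β ∈ Set.Ioo (0 : ℝ) 1 ∧ (1 - β) / N = binCDF N k (t β)) :
    StrictAntiOn t (Set.Ioo 0 1) ∧
    Filter.Tendsto t (nhdsWithin 1 (Set.Ioo (0 : ℝ) 1)) (nhds 0) :=
  stmt_2_general N k hN hk2 t ht
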